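/- Lipschitz estimate for the Kalman gain: for symmetric positive semidefinite d×d matrices P, Q, ‖K(P) - K(Q)‖ ≤ (1 + ‖P‖‖H‖²‖R^{-1}‖)‖H‖‖R^{-1}‖‖P - Q‖ in spectral norm, where K(P) = P Hᵀ (R + H P Hᵀ)^{-1}. -/

import Mathlib

/-!
With `S(P) = R + H P Hᵀ`, the gains satisfy `K(P) - K(Q) = (1 - K(P) H) (P - Q) Hᵀ S(Q)⁻¹`, so by
submultiplicativity everything reduces to `‖S(P)⁻¹‖ ≤ ‖R⁻¹‖`, which also gives
`‖K(P)‖ ≤ ‖P‖ ‖H‖ ‖R⁻¹‖`. For `A` positive definite and `B` positive semidefinite,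
`‖(A + B)⁻¹‖ ≤ ‖A⁻¹‖` follows from `‖x‖² ≤ ‖A⁻¹‖ ⟪x, A x⟫` applied to `x = (A + B)⁻¹ y`; that
inequality in turn comes from writing `A = S S` with `S = √A` and the C⋆-identity
`‖S⁻¹‖² = ‖S⁻¹ (S⁻¹)ᴴ‖ = ‖A⁻¹‖`.
-/

open Matrix
open scoped Matrix.Norms.L2Operator MatrixOrder RealInnerProductSpace

namespace Matrix

lemma l2_opNorm_mul_le_of_le {l m n : Type*} [Fintype l] [Fintype m] [Fintype n] [DecidableEq m]
    [DecidableEq n] {A : Matrix l m ℝ} {B : Matrix m n ℝ} {a b : ℝ}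
    (hA : ‖A‖ ≤ a) (hB : ‖B‖ ≤ b) : ‖A * B‖ ≤ a * b :=
  (l2_opNorm_mul A B).trans (mul_le_mul hA hB (norm_nonneg _) ((norm_nonneg _).trans hA))

lemma l2_opNorm_transpose {m n : Type*} [Fintype m] [Fintype n] [DecidableEq m] [DecidableEq n]
    (A : Matrix m n ℝ) : ‖Aᵀ‖ = ‖A‖ := by
  rw [← conjTranspose_eq_transpose_of_trivial, l2_opNorm_conjTranspose]

lemma PosSemidef.mul_mul_transpose_same {m n : Type*} [Fintype m] [Fintype n]
    {P : Matrix n n ℝ} (hP : P.PosSemidef) (H : Matrix m n ℝ) : (H * P * Hᵀ).PosSemidef := by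
  simpa only [conjTranspose_eq_transpose_of_trivial] using hP.mul_mul_conjTranspose_same H

variable {n : Type*} [Fintype n] [DecidableEq n]

lemma l2_opNorm_one_le : ‖(1 : Matrix n n ℝ)‖ ≤ 1 := by
  rw [cstar_norm_def, map_one]
  exact ContinuousLinearMap.norm_id_le

lemma PosDef.norm_sq_le_norm_inv_mul_inner {A : Matrix n n ℝ} (hA : A.PosDef)
    (x : EuclideanSpace ℝ n) : ‖x‖ ^ 2 ≤ ‖A⁻¹‖ * ⟪x, toEuclideanCLM (𝕜 := ℝ) A x⟫ := by
  set S := CFC.sqrt A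
  have hSS : star S * S = A := by
    rw [(CFC.sqrt_nonneg A).isSelfAdjoint.star_eq, CFC.sqrt_mul_sqrt_self A hA.posSemidef.nonneg]
  have hS : IsUnit S := isUnit_of_mul_isUnit_right (hSS ▸ hA.isUnit)
  have hS_inv : ‖S⁻¹‖ ^ 2 = ‖A⁻¹‖ := by
    rw [sq, ← CStarRing.norm_self_mul_star, star_eq_conjTranspose, conjTranspose_nonsing_inv,
      ← mul_inv_rev, ← star_eq_conjTranspose, hSS]
  have hinner : ⟪x, toEuclideanCLM (𝕜 := ℝ) A x⟫ = ‖toEuclideanCLM (𝕜 := ℝ) S x‖ ^ 2 := by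
    rw [← hSS, map_mul, map_star, ContinuousLinearMap.star_eq_adjoint, mul_apply_eq_comp,
      ContinuousLinearMap.adjoint_inner_right, real_inner_self_eq_norm_sq]
  have hx : ‖x‖ ≤ ‖S⁻¹‖ * ‖toEuclideanCLM (𝕜 := ℝ) S x‖ := by
    have : toEuclideanCLM (𝕜 := ℝ) S⁻¹ (toEuclideanCLM (𝕜 := ℝ) S x) = x := by
      rw [← mul_apply_eq_comp, ← map_mul, nonsing_inv_mul _ ((isUnit_iff_isUnit_det S).mp hS),
        map_one]
      rfl
    simpa only [this, l2_opNorm_toEuclideanCLM] using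
      (toEuclideanCLM (𝕜 := ℝ) S⁻¹).le_opNorm (toEuclideanCLM (𝕜 := ℝ) S x)
  calc ‖x‖ ^ 2 ≤ (‖S⁻¹‖ * ‖toEuclideanCLM (𝕜 := ℝ) S x‖) ^ 2 := by gcongr
    _ = ‖A⁻¹‖ * ⟪x, toEuclideanCLM (𝕜 := ℝ) A x⟫ := by rw [mul_pow, hS_inv, hinner]

lemma PosDef.norm_inv_add_le {A B : Matrix n n ℝ} (hA : A.PosDef) (hB : B.PosSemidef) :
    ‖(A + B)⁻¹‖ ≤ ‖A⁻¹‖ := by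
  rw [cstar_norm_def]
  refine ContinuousLinearMap.opNorm_le_bound _ (norm_nonneg _) fun y ↦ ?_
  set x := toEuclideanCLM (𝕜 := ℝ) (A + B)⁻¹ y
  have hy : toEuclideanCLM (𝕜 := ℝ) (A + B) x = y := by
    rw [← mul_apply_eq_comp, ← map_mul,
      mul_nonsing_inv _ ((isUnit_iff_isUnit_det _).mp (hA.add_posSemidef hB).isUnit), map_one]
    rfl
  have hBx : 0 ≤ ⟪x, toEuclideanCLM (𝕜 := ℝ) B x⟫ := by
    simpa [inner_toEuclideanCLM] using hB.dotProduct_mulVec_nonneg (WithLp.ofLp x)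
  have key : ‖x‖ * ‖x‖ ≤ ‖A⁻¹‖ * ‖y‖ * ‖x‖ :=
    calc ‖x‖ * ‖x‖ = ‖x‖ ^ 2 := (sq _).symm
      _ ≤ ‖A⁻¹‖ * ⟪x, toEuclideanCLM (𝕜 := ℝ) A x⟫ := hA.norm_sq_le_norm_inv_mul_inner x
      _ ≤ ‖A⁻¹‖ * ⟪x, toEuclideanCLM (𝕜 := ℝ) (A + B) x⟫ := by
        rw [map_add, _root_.add_apply, inner_add_right]
        gcongr
        linarith
      _ = ‖A⁻¹‖ * ⟪x, y⟫ := by rw [hy]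
      _ ≤ ‖A⁻¹‖ * ‖y‖ * ‖x‖ := by
        rw [mul_assoc, mul_comm ‖y‖]
        gcongr
        exact real_inner_le_norm x y
  rcases (norm_nonneg x).eq_or_lt with hx | hx
  · rw [← hx]; positivity
  · exact le_of_mul_le_mul_right key hx

end Matrix

section KalmanGain

variable {α d q : Type*} [Fintype d] [Fintype q] [DecidableEq d] [DecidableEq q]

noncomputable def kalmanGain [CommRing α] (H : Matrix q d α) (R : Matrix q q α)
    (P : Matrix d d α) : Matrix d q α :=
  P * Hᵀ * (R + H * P * Hᵀ)⁻¹

lemma kalmanGain_sub_kalmanGain [CommRing α] {H : Matrix q d α} {R : Matrix q q α}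
    {P Q : Matrix d d α} (hP : IsUnit (R + H * P * Hᵀ)) (hQ : IsUnit (R + H * Q * Hᵀ)) :
    kalmanGain H R P - kalmanGain H R Q =
      (1 - kalmanGain H R P * H) * (P - Q) * Hᵀ * (R + H * Q * Hᵀ)⁻¹ := by
  set SP := R + H * P * Hᵀ
  set SQ := R + H * Q * Hᵀ
  have hK : kalmanGain H R P * SP = P * Hᵀ := by
    rw [kalmanGain, Matrix.mul_assoc, nonsing_inv_mul _ ((isUnit_iff_isUnit_det _).mp hP),
      Matrix.mul_one]
  have hSQ : SQ * SQ⁻¹ = 1 := mul_nonsing_inv _ ((isUnit_iff_isUnit_det _).mp hQ)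
  have hSPQ : SP - SQ = H * (P - Q) * Hᵀ := by
    simp only [SP, SQ, Matrix.mul_sub, Matrix.sub_mul, add_sub_add_left_eq_sub]
  set K := kalmanGain H R P
  calc K - kalmanGain H R Q = K * SQ * SQ⁻¹ - Q * Hᵀ * SQ⁻¹ := by
        rw [Matrix.mul_assoc K, hSQ, Matrix.mul_one]; rfl
    _ = (P - Q) * Hᵀ * SQ⁻¹ - K * (SP - SQ) * SQ⁻¹ := by
        rw [Matrix.mul_sub, hK]; simp only [Matrix.sub_mul]; abel
    _ = (1 - K * H) * (P - Q) * Hᵀ * SQ⁻¹ := by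
        rw [hSPQ]; simp only [Matrix.sub_mul, Matrix.one_mul, Matrix.mul_assoc]

lemma norm_kalmanGain_le {H : Matrix q d ℝ} {R : Matrix q q ℝ} {P : Matrix d d ℝ}
    (hR : R.PosDef) (hP : P.PosSemidef) : ‖kalmanGain H R P‖ ≤ ‖P‖ * ‖H‖ * ‖R⁻¹‖ :=
  l2_opNorm_mul_le_of_le (l2_opNorm_mul_le_of_le le_rfl (l2_opNorm_transpose H).le)
    (hR.norm_inv_add_le (hP.mul_mul_transpose_same H))

end KalmanGain

/-- Lipschitz estimate for the Kalman gain `K(P) = P Hᵀ (R + H P Hᵀ)⁻¹`: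
`‖K(P) - K(Q)‖ ≤ (1 + ‖P‖ ‖H‖² ‖R⁻¹‖) ‖H‖ ‖R⁻¹‖ ‖P - Q‖`. -/
theorem stmt_13 {d q : ℕ} (P Q : Matrix (Fin d) (Fin d) ℝ)
    (hP : P.PosSemidef) (hQ : Q.PosSemidef)
    (H : Matrix (Fin q) (Fin d) ℝ) (R : Matrix (Fin q) (Fin q) ℝ) (hR : R.PosDef) :
    ‖P * Hᵀ * (R + H * P * Hᵀ)⁻¹ - Q * Hᵀ * (R + H * Q * Hᵀ)⁻¹‖ ≤
      (1 + ‖P‖ * ‖H‖ ^ 2 * ‖R⁻¹‖) * ‖H‖ * ‖R⁻¹‖ * ‖P - Q‖ := by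
  change ‖kalmanGain H R P - kalmanGain H R Q‖ ≤ _
  rw [kalmanGain_sub_kalmanGain (hR.add_posSemidef (hP.mul_mul_transpose_same H)).isUnit
    (hR.add_posSemidef (hQ.mul_mul_transpose_same H)).isUnit]
  have hI : ‖1 - kalmanGain H R P * H‖ ≤ 1 + ‖P‖ * ‖H‖ ^ 2 * ‖R⁻¹‖ := by
    refine (norm_sub_le _ _).trans (add_le_add l2_opNorm_one_le ?_)
    calc _ ≤ ‖P‖ * ‖H‖ * ‖R⁻¹‖ * ‖H‖ := l2_opNorm_mul_le_of_le (norm_kalmanGain_le hR hP) le_rfl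
      _ = ‖P‖ * ‖H‖ ^ 2 * ‖R⁻¹‖ := by ring
  have hSQ := hR.norm_inv_add_le (hQ.mul_mul_transpose_same H)
  calc _ ≤ (1 + ‖P‖ * ‖H‖ ^ 2 * ‖R⁻¹‖) * ‖P - Q‖ * ‖H‖ * ‖R⁻¹‖ :=
        l2_opNorm_mul_le_of_le (l2_opNorm_mul_le_of_le (l2_opNorm_mul_le_of_le hI le_rfl)
          (l2_opNorm_transpose H).le) hSQ
    _ = _ := by ring
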